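/- arXiv:1407.6543 — 4 statements merged into one kernel-verified Lean document; each statement's English description precedes it below -/
import Mathlib

section
/- Let 0 < s < 1, δ > 0, and let E ⊂ S¹ be a finite set satisfying the non-concentration condition |E ∩ B(x,r)| ≤ C(r/δ)^s for all x ∈ S¹ and δ ≤ r ≤ 1. Let b, b' ∈ ℝ² be distinct points with |b − b'| ≥ δ. Then the number of directions e ∈ E such that b and b' lie in a common tube of width 2δ perpendicular to e is at most C'·|b−b'|^{-s}·δ^s·δ^{-s} = C'·|b−b'|^{-s}, with C' depending only on C. -/
noncomputable section
open scoped Classical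

/-- Euclidean distance in the plane (modeled as `ℝ × ℝ`). -/
def ed (p q : ℝ × ℝ) : ℝ := Real.sqrt ((p.1 - q.1)^2 + (p.2 - q.2)^2)

/-- Standard inner product on `ℝ × ℝ`. -/
def dot (p q : ℝ × ℝ) : ℝ := p.1 * q.1 + p.2 * q.2

lemma ed_le {p q : ℝ × ℝ} {y : ℝ} (hy : 0 ≤ y)
    (h : (p.1 - q.1)^2 + (p.2 - q.2)^2 ≤ y^2) : ed p q ≤ y :=
  le_trans (Real.sqrt_le_sqrt h) (by rw [Real.sqrt_sq hy])

lemma unit_of_ed (e : ℝ × ℝ) (h : ed e 0 = 1) : e.1^2 + e.2^2 = 1 := by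
  have := congrArg (fun x => x^2) h
  simp only [ed] at this
  rw [Real.sq_sqrt (by positivity)] at this
  simpa using this

/-- If `E ⊂ S¹` satisfies the non-concentration `|E ∩ B(x,r)| ≤ C(r/δ)^s` for
`x ∈ S¹`, `δ ≤ r ≤ 1`, and `b ≠ b'` are points at distance `≥ δ` (and `≤ 4`), then
the number of `e ∈ E` for which `b, b'` share a tube of width `2δ` perpendicular
to `e` is at most `C'·|b - b'|^{-s}`, with `C'` depending only on `C`. -/
theorem stmt5 (C : ℝ) :
    ∃ C' : ℝ, 0 < C' ∧ ∀ (δ s : ℝ) (E : Finset (ℝ × ℝ)) (b b' : ℝ × ℝ),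
      0 < δ → δ ≤ 1 → 0 < s → s < 1 →
      (∀ e ∈ E, ed e 0 = 1) →
      (∀ x : ℝ × ℝ, ed x 0 = 1 → ∀ r : ℝ, δ ≤ r → r ≤ 1 →
        ((E.filter (fun e => ed e x ≤ r)).card : ℝ) ≤ C * (r / δ) ^ s) →
      b ≠ b' → δ ≤ ed b b' → ed b b' ≤ 4 →
      ((E.filter (fun e => ∃ t : ℝ, |dot e b - t| ≤ δ ∧ |dot e b' - t| ≤ δ)).card : ℝ)
        ≤ C' * (ed b b') ^ (-s) := by
  refine ⟨16 * |C| + 1, by positivity, ?_⟩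
  intro δ s E b b' hδ hδ1 hs hs1 hEs hNC hne hdl hdh
  set d := ed b b' with hdd
  have hd0 : 0 < d := lt_of_lt_of_le hδ hdl
  -- C is nonnegative
  have hC : 0 ≤ C := by
    have h1 : ed ((1:ℝ),(0:ℝ)) 0 = 1 := by rw [ed]; norm_num
    have h2 := hNC (1,0) h1 δ le_rfl hδ1
    rw [div_self hδ.ne', Real.one_rpow, mul_one] at h2
    exact le_trans (Nat.cast_nonneg _) h2
  rw [abs_of_nonneg hC]
  have hds : (0:ℝ) < d ^ (-s) := Real.rpow_pos_of_pos hd0 _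
  have h4s : (4:ℝ) ^ s ≤ 4 := by
    calc (4:ℝ) ^ s ≤ (4:ℝ) ^ (1:ℝ) :=
          Real.rpow_le_rpow_of_exponent_le (by norm_num) hs1.le
      _ = 4 := Real.rpow_one 4
  have h4d : ((4:ℝ)/d) ^ s ≤ 4 * d ^ (-s) := by
    rw [Real.div_rpow (by norm_num) hd0.le, Real.rpow_neg hd0.le, div_eq_mul_inv]
    exact mul_le_mul_of_nonneg_right h4s (by positivity)
  set F := E.filter (fun e => ∃ t : ℝ, |dot e b - t| ≤ δ ∧ |dot e b' - t| ≤ δ) with hF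
  have hd2 : (b.1-b'.1)^2 + (b.2-b'.2)^2 = d^2 := by
    rw [hdd, ed, Real.sq_sqrt (by positivity)]
  set v1 := (b.1-b'.1)/d with hv1
  set v2 := (b.2-b'.2)/d with hv2
  have huv : v1^2 + v2^2 = 1 := by
    rw [hv1, hv2]
    field_simp
    linarith
  -- membership gives |e·(b-b')| ≤ 2δ, hence |a| ≤ 2δ/d where a = e·v
  have key : ∀ e ∈ F, |e.1 * v1 + e.2 * v2| ≤ 2 * δ / d := by
    intro e he
    obtain ⟨-, t, h1, h2⟩ := Finset.mem_filter.mp he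
    have habs : |e.1 * (b.1 - b'.1) + e.2 * (b.2 - b'.2)| ≤ 2 * δ := by
      have heq : e.1 * (b.1 - b'.1) + e.2 * (b.2 - b'.2)
          = (dot e b - t) - (dot e b' - t) := by simp [dot]; ring
      rw [heq]
      calc |(dot e b - t) - (dot e b' - t)| ≤ |dot e b - t| + |dot e b' - t| :=
            abs_sub _ _
        _ ≤ 2 * δ := by linarith
    have heq2 : e.1 * v1 + e.2 * v2 = (e.1 * (b.1 - b'.1) + e.2 * (b.2 - b'.2)) / d := by
      rw [hv1, hv2]; ring
    rw [heq2, abs_div, abs_of_pos hd0]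
    gcongr
  by_cases hcase : 4 * δ ≤ d
  · -- main case: use r = 4δ/d with the two perpendicular directions
    set r := 4 * δ / d with hr
    have hr1 : δ ≤ r := by
      rw [hr, le_div_iff₀ hd0]; nlinarith
    have hr2 : r ≤ 1 := by
      rw [hr, div_le_one hd0]; linarith
    have hr0 : 0 ≤ r := le_trans hδ.le hr1
    have hpu : ed (-v2, v1) 0 = 1 := by
      rw [ed]
      show Real.sqrt ((-v2 - 0)^2 + (v1 - 0)^2) = 1
      rw [show (-v2 - 0)^2 + (v1 - 0)^2 = v1^2 + v2^2 by ring, huv, Real.sqrt_one]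
    have hqu : ed (v2, -v1) 0 = 1 := by
      rw [ed]
      show Real.sqrt ((v2 - 0)^2 + (-v1 - 0)^2) = 1
      rw [show (v2 - 0)^2 + (-v1 - 0)^2 = v1^2 + v2^2 by ring, huv, Real.sqrt_one]
    have hsub : F ⊆ (E.filter (fun e => ed e (-v2, v1) ≤ r)) ∪ (E.filter (fun e => ed e (v2, -v1) ≤ r)) := by
      intro e he
      have heE : e ∈ E := (Finset.mem_filter.mp he).1
      have heu : e.1^2 + e.2^2 = 1 := unit_of_ed e (hEs e heE)
      have ha := key e he
      have ha2 : (e.1 * v1 + e.2 * v2)^2 ≤ (2*δ/d)^2 := by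
        have := abs_nonneg (e.1 * v1 + e.2 * v2)
        nlinarith [ha, abs_nonneg (e.1 * v1 + e.2 * v2), sq_abs (e.1 * v1 + e.2 * v2)]
      set c := e.2 * v1 - e.1 * v2 with hc
      have hlag : (e.1 * v1 + e.2 * v2)^2 + c^2 = 1 := by
        rw [hc]; linear_combination (v1^2 + v2^2) * heu + huv
      have hc1 : c^2 ≤ 1 := by
        linarith only [hlag, sq_nonneg (e.1 * v1 + e.2 * v2)]
      have hrd : (2*δ/d)^2 ≤ r^2/2 := by
        rw [hr]
        have e1 : (2*δ/d)^2 = 4*(δ/d)^2 := by ring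
        have e2 : ((4*δ/d)^2)/2 = 8*(δ/d)^2 := by ring
        linarith only [sq_nonneg (δ/d), e1, e2]
      have hcle : c ≤ 1 := by nlinarith only [hc1, sq_nonneg (c-1)]
      have hcge : -1 ≤ c := by nlinarith only [hc1, sq_nonneg (c+1)]
      rcases le_or_gt 0 c with hcc | hcc
      · apply Finset.mem_union_left
        refine Finset.mem_filter.mpr ⟨heE, ?_⟩
        apply ed_le hr0
        show (e.1 - (-v2))^2 + (e.2 - v1)^2 ≤ r^2
        have hexp : (e.1 - (-v2))^2 + (e.2 - v1)^2 = 2 - 2*c := by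
          rw [hc]; linear_combination heu + huv
        rw [hexp]
        have hprod : 0 ≤ c * (1 - c) := mul_nonneg hcc (by linarith only [hcle])
        nlinarith only [hlag, ha2, hrd, hprod]
      · apply Finset.mem_union_right
        refine Finset.mem_filter.mpr ⟨heE, ?_⟩
        apply ed_le hr0
        show (e.1 - v2)^2 + (e.2 - (-v1))^2 ≤ r^2
        have hexp : (e.1 - v2)^2 + (e.2 - (-v1))^2 = 2 + 2*c := by
          rw [hc]; linear_combination heu + huv
        rw [hexp]
        have hprod : 0 ≤ (-c) * (1 + c) := mul_nonneg (by linarith only [hcc]) (by linarith only [hcge])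
        nlinarith only [hlag, ha2, hrd, hprod]
    have hcard : (F.card : ℝ) ≤ 2 * (C * (r/δ)^s) := by
      have h1 := hNC (-v2, v1) hpu r hr1 hr2
      have h2 := hNC (v2, -v1) hqu r hr1 hr2
      have h3 : F.card ≤ (E.filter (fun e => ed e (-v2, v1) ≤ r)).card
          + (E.filter (fun e => ed e (v2, -v1) ≤ r)).card :=
        le_trans (Finset.card_le_card hsub) (Finset.card_union_le _ _)
      have h3' : (F.card : ℝ) ≤ ((E.filter (fun e => ed e (-v2, v1) ≤ r)).card : ℝ)
          + ((E.filter (fun e => ed e (v2, -v1) ≤ r)).card : ℝ) := by exact_mod_cast h3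
      linarith only [h1, h2, h3']
    have hrδ : r / δ = 4 / d := by rw [hr]; field_simp
    rw [hrδ] at hcard
    calc (F.card : ℝ) ≤ 2 * (C * (4/d)^s) := hcard
      _ ≤ 2 * (C * (4 * d^(-s))) := by
          apply mul_le_mul_of_nonneg_left _ (by norm_num)
          exact mul_le_mul_of_nonneg_left h4d hC
      _ ≤ (16 * C + 1) * d ^ (-s) := by
          have h0 : 0 ≤ C * d ^ (-s) := mul_nonneg hC hds.le
          nlinarith only [hds, h0]
  · -- d < 4δ : bound the whole of E by covering the circle with 4 unit balls
    push_neg at hcase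
    have x1u : ed ((1:ℝ),(0:ℝ)) 0 = 1 := by rw [ed]; norm_num
    have x2u : ed ((-1:ℝ),(0:ℝ)) 0 = 1 := by
      rw [ed]; norm_num
    have x3u : ed ((0:ℝ),(1:ℝ)) 0 = 1 := by rw [ed]; norm_num
    have x4u : ed ((0:ℝ),(-1:ℝ)) 0 = 1 := by
      rw [ed]; norm_num
    have hsub : E ⊆ (E.filter (fun e => ed e ((1:ℝ),(0:ℝ)) ≤ 1))
        ∪ (E.filter (fun e => ed e ((-1:ℝ),(0:ℝ)) ≤ 1))
        ∪ (E.filter (fun e => ed e ((0:ℝ),(1:ℝ)) ≤ 1))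
        ∪ (E.filter (fun e => ed e ((0:ℝ),(-1:ℝ)) ≤ 1)) := by
      intro e heE
      have heu : e.1^2 + e.2^2 = 1 := unit_of_ed e (hEs e heE)
      have hmax : (1:ℝ)/2 ≤ e.1 ∨ e.1 ≤ -(1/2) ∨ (1:ℝ)/2 ≤ e.2 ∨ e.2 ≤ -(1/2) := by
        by_contra h
        push_neg at h
        obtain ⟨h1, h2, h3, h4⟩ := h
        have p1 : 0 < (1/2 - e.1) * (1/2 + e.1) :=
          mul_pos (by linarith only [h1]) (by linarith only [h2])
        have p2 : 0 < (1/2 - e.2) * (1/2 + e.2) :=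
          mul_pos (by linarith only [h3]) (by linarith only [h4])
        linarith only [heu, p1, p2]
      rcases hmax with h | h | h | h
      · refine Finset.mem_union_left _ (Finset.mem_union_left _ (Finset.mem_union_left _
          (Finset.mem_filter.mpr ⟨heE, ed_le zero_le_one ?_⟩)))
        show (e.1 - 1)^2 + (e.2 - 0)^2 ≤ (1:ℝ)^2
        linarith only [heu, h]
      · refine Finset.mem_union_left _ (Finset.mem_union_left _ (Finset.mem_union_right _
          (Finset.mem_filter.mpr ⟨heE, ed_le zero_le_one ?_⟩)))
        show (e.1 - (-1))^2 + (e.2 - 0)^2 ≤ (1:ℝ)^2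
        linarith only [heu, h]
      · refine Finset.mem_union_left _ (Finset.mem_union_right _
          (Finset.mem_filter.mpr ⟨heE, ed_le zero_le_one ?_⟩))
        show (e.1 - 0)^2 + (e.2 - 1)^2 ≤ (1:ℝ)^2
        linarith only [heu, h]
      · refine Finset.mem_union_right _
          (Finset.mem_filter.mpr ⟨heE, ed_le zero_le_one ?_⟩)
        show (e.1 - 0)^2 + (e.2 - (-1))^2 ≤ (1:ℝ)^2
        linarith only [heu, h]
    have hcardE : (E.card : ℝ) ≤ 4 * (C * (1/δ)^s) := by
      have c1 := hNC (1,0) x1u 1 hδ1 le_rfl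
      have c2 := hNC (-1,0) x2u 1 hδ1 le_rfl
      have c3 := hNC (0,1) x3u 1 hδ1 le_rfl
      have c4 := hNC (0,-1) x4u 1 hδ1 le_rfl
      have h3 : E.card ≤ (E.filter (fun e => ed e ((1:ℝ),(0:ℝ)) ≤ 1)).card
          + (E.filter (fun e => ed e ((-1:ℝ),(0:ℝ)) ≤ 1)).card
          + (E.filter (fun e => ed e ((0:ℝ),(1:ℝ)) ≤ 1)).card
          + (E.filter (fun e => ed e ((0:ℝ),(-1:ℝ)) ≤ 1)).card := by
        refine le_trans (Finset.card_le_card hsub) ?_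
        refine le_trans (Finset.card_union_le _ _) ?_
        gcongr
        refine le_trans (Finset.card_union_le _ _) ?_
        gcongr
        exact Finset.card_union_le _ _
      have h3' : (E.card : ℝ) ≤ ((E.filter (fun e => ed e ((1:ℝ),(0:ℝ)) ≤ 1)).card : ℝ)
          + ((E.filter (fun e => ed e ((-1:ℝ),(0:ℝ)) ≤ 1)).card : ℝ)
          + ((E.filter (fun e => ed e ((0:ℝ),(1:ℝ)) ≤ 1)).card : ℝ)
          + ((E.filter (fun e => ed e ((0:ℝ),(-1:ℝ)) ≤ 1)).card : ℝ) := by exact_mod_cast h3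
      linarith only [c1, c2, c3, c4, h3']
    have hmono : ((1:ℝ)/δ)^s ≤ ((4:ℝ)/d)^s := by
      apply Real.rpow_le_rpow (by positivity) _ hs.le
      rw [div_le_div_iff₀ hδ hd0]
      linarith
    have hcard : (F.card : ℝ) ≤ 4 * (C * ((4:ℝ)/d)^s) := by
      have hFE : (F.card : ℝ) ≤ (E.card : ℝ) := by
        exact_mod_cast Finset.card_le_card (Finset.filter_subset _ _)
      calc (F.card : ℝ) ≤ (E.card : ℝ) := hFE
        _ ≤ 4 * (C * (1/δ)^s) := hcardE
        _ ≤ 4 * (C * ((4:ℝ)/d)^s) := by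
            apply mul_le_mul_of_nonneg_left _ (by norm_num)
            exact mul_le_mul_of_nonneg_left hmono hC
    calc (F.card : ℝ) ≤ 4 * (C * ((4:ℝ)/d)^s) := hcard
      _ ≤ 4 * (C * (4 * d^(-s))) := by
          apply mul_le_mul_of_nonneg_left _ (by norm_num)
          exact mul_le_mul_of_nonneg_left h4d hC
      _ ≤ (16 * C + 1) * d ^ (-s) := by
          have h0 : 0 ≤ C * d ^ (-s) := mul_nonneg hC hds.le
          nlinarith only [hds, h0]
end
end

section
/- Let n be a perfect square and P = {0,1,...,n^{1/2}} × {0,1,...,n^{1/2}} ⊂ ℤ². For 1/2 ≤ s ≤ 1 and r = n^{s−1/2}, there exists a set G ⊂ P×P of pairs of distinct points with |G| ≥ c·n^{1+s} whose set of spanned directions S(G) = {(p−q)/|p−q| : (p,q) ∈ G} has cardinality at most C·n^{2s−1}, while no line contains more than n^{1/2}+1 points of P. -/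
noncomputable section
open scoped Classical

/-!
Take `r = m^(2s-1) ∈ [1, m]` and `R ≈ r`. For each primitive vector `v ∈ [1, R]²` (a positive
proportion of `[1, R]²`, since `∑_{d ≥ 2} d⁻² < 1`), each `k ≤ K ≈ m / R` and each `x` in the
lower-left quarter of the grid, the pair `(x, x + k v)` lies in the grid and spans the direction of
`v`. Primitivity makes `(v, k, x)` recoverable from the pair, so there are `≈ R² · (m / R) · m² ≈
r m³ = n^(1+s)` pairs but only `≤ R² ≈ n^(2s-1)` directions. A line through the grid is injectively
projected to a coordinate axis, hence meets at most `m + 1` grid points.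
-/

open Finset

section Line

variable {K E : Type*} [Field K] [AddCommGroup E] [Module K E]

lemma injOn_setOf_eq_add_smul (π : E →ₗ[K] K) (p₀ : E) {d : E} (hd : π d ≠ 0) :
    Set.InjOn π {p | ∃ t : K, p = p₀ + t • d} := by
  rintro _ ⟨t, rfl⟩ _ ⟨t', rfl⟩ h
  simp only [map_add, map_smul, smul_eq_mul, add_right_inj] at h
  rw [mul_right_cancel₀ hd h]

lemma card_filter_mem_line_le (P : Finset E) (π : E →ₗ[K] K) (p₀ : E) {d : E} (hd : π d ≠ 0) :
    #(P.filter fun p => ∃ t : K, p = p₀ + t • d) ≤ #(P.image π) :=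
  card_le_card_of_injOn π (fun _ hp => mem_image_of_mem π (mem_filter.1 hp).1)
    fun _ hp _ hq => injOn_setOf_eq_add_smul π p₀ hd (mem_filter.1 hp).2 (mem_filter.1 hq).2

end Line

lemma ed_add_smul (p v : ℝ × ℝ) (k : ℝ) : ed p (p + k • v) = |k| * ed 0 v := by
  simp only [ed, Prod.fst_add, Prod.snd_add, Prod.smul_fst, Prod.smul_snd, smul_eq_mul,
    Prod.fst_zero, Prod.snd_zero]
  rw [← Real.sqrt_sq_eq_abs, ← Real.sqrt_mul (sq_nonneg k)]
  ring_nf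

lemma inv_ed_smul_sub_add_smul (p v : ℝ × ℝ) {k : ℝ} (hk : 0 < k) :
    (ed p (p + k • v))⁻¹ • (p - (p + k • v)) = -((ed 0 v)⁻¹ • v) := by
  rw [ed_add_smul, abs_of_pos hk, sub_add_cancel_left, smul_neg, smul_smul, mul_inv_rev,
    mul_assoc, inv_mul_cancel₀ hk.ne', mul_one]

def castPair : ℕ × ℕ →+ ℝ × ℝ := (Nat.castAddMonoidHom ℝ).prodMap (Nat.castAddMonoidHom ℝ)

lemma castPair_injective : Function.Injective castPair :=
  Prod.map_injective.2 ⟨Nat.cast_injective, Nat.cast_injective⟩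

def grid (m : ℕ) : Finset (ℝ × ℝ) := (range (m + 1) ×ˢ range (m + 1)).image castPair

lemma castPair_mem_grid {m : ℕ} {u : ℕ × ℕ} : castPair u ∈ grid m ↔ u.1 ≤ m ∧ u.2 ≤ m := by
  rw [grid, castPair_injective.mem_finset_image, mem_product, mem_range, mem_range,
    Nat.lt_succ_iff, Nat.lt_succ_iff]

lemma card_image_grid_le (m : ℕ) {π : ℝ × ℝ → ℝ} (hπ : π = Prod.fst ∨ π = Prod.snd) :
    #((grid m).image π) ≤ m + 1 := by
  calc #((grid m).image π) ≤ #((range (m + 1)).image (Nat.cast : ℕ → ℝ)) := by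
        refine card_le_card fun x hx => ?_
        obtain ⟨_, hp, rfl⟩ := mem_image.1 hx
        obtain ⟨u, hu, rfl⟩ := mem_image.1 hp
        rw [mem_product] at hu
        rcases hπ with rfl | rfl
        exacts [mem_image_of_mem _ hu.1, mem_image_of_mem _ hu.2]
    _ ≤ m + 1 := card_image_le.trans (card_range _).le

lemma card_grid_filter_mem_line_le (m : ℕ) (p₀ : ℝ × ℝ) {d : ℝ × ℝ} (hd : d ≠ 0) :
    #((grid m).filter fun p => ∃ t : ℝ, p = p₀ + t • d) ≤ m + 1 := by
  obtain h | h : d.1 ≠ 0 ∨ d.2 ≠ 0 := by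
    by_contra! h
    exact hd (Prod.ext h.1 h.2)
  · exact (card_filter_mem_line_le _ (LinearMap.fst ℝ ℝ ℝ) p₀ h).trans
      (card_image_grid_le m (.inl rfl))
  · exact (card_filter_mem_line_le _ (LinearMap.snd ℝ ℝ ℝ) p₀ h).trans
      (card_image_grid_le m (.inr rfl))

lemma sum_Icc_two_inv_sq_le (R : ℕ) : ∑ d ∈ Icc 2 R, ((d : ℝ) ^ 2)⁻¹ ≤ 3 / 4 := by
  rcases lt_or_ge R 2 with hR | hR
  · rw [Icc_eq_empty (by omega), sum_empty]
    norm_num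
  · rw [← Ioc_insert_left hR, sum_insert left_notMem_Ioc]
    have htail := sum_Ioc_inv_sq_le_sub (α := ℝ) two_ne_zero hR
    have hR0 : (0 : ℝ) ≤ (R : ℝ)⁻¹ := by positivity
    norm_num at htail ⊢
    linarith

def coprimePairs (R : ℕ) : Finset (ℕ × ℕ) :=
  (Icc 1 R ×ˢ Icc 1 R).filter fun v => Nat.Coprime v.1 v.2

lemma card_filter_dvd_dvd (R d : ℕ) :
    #((Icc 1 R ×ˢ Icc 1 R).filter fun v => d ∣ v.1 ∧ d ∣ v.2) = (R / d) ^ 2 := by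
  rw [filter_product, card_product, sq, ← Nat.Ioc_filter_dvd_card_eq_div]
  rfl

lemma filter_not_coprime_subset (R : ℕ) :
    (Icc 1 R ×ˢ Icc 1 R).filter (fun v => ¬ Nat.Coprime v.1 v.2) ⊆
      (Icc 2 R).biUnion fun d => (Icc 1 R ×ˢ Icc 1 R).filter fun v => d ∣ v.1 ∧ d ∣ v.2 := by
  intro v hv
  simp only [mem_filter, mem_product, mem_Icc] at hv
  obtain ⟨⟨⟨ha1, haR⟩, hb⟩, hv⟩ := hv
  have hg : 2 ≤ Nat.gcd v.1 v.2 := by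
    have := Nat.gcd_pos_of_pos_left v.2 ha1
    rw [Nat.Coprime] at hv
    omega
  simp only [mem_biUnion, mem_filter, mem_product, mem_Icc]
  exact ⟨_, ⟨hg, (Nat.gcd_le_left _ ha1).trans haR⟩, ⟨⟨ha1, haR⟩, hb⟩,
    Nat.gcd_dvd_left _ _, Nat.gcd_dvd_right _ _⟩

lemma sq_le_four_mul_card_coprimePairs (R : ℕ) : (R : ℝ) ^ 2 ≤ 4 * #(coprimePairs R) := by
  have hsplit := card_filter_add_card_filter_not (s := Icc 1 R ×ˢ Icc 1 R)
    (p := fun v => Nat.Coprime v.1 v.2)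
  rw [card_product, Nat.card_Icc, add_tsub_cancel_right] at hsplit
  have hbad : (#((Icc 1 R ×ˢ Icc 1 R).filter (fun v => ¬ Nat.Coprime v.1 v.2)) : ℝ) ≤
      3 / 4 * R ^ 2 := by
    calc _ ≤ ((∑ d ∈ Icc 2 R, (R / d) ^ 2 : ℕ) : ℝ) := by
          rw [← sum_congr rfl fun d _ => card_filter_dvd_dvd R d]
          exact_mod_cast (card_le_card (filter_not_coprime_subset R)).trans card_biUnion_le
      _ ≤ ∑ d ∈ Icc 2 R, (R : ℝ) ^ 2 * ((d : ℝ) ^ 2)⁻¹ := by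
          push_cast
          refine sum_le_sum fun d _ => ?_
          rw [← div_eq_mul_inv, ← div_pow]
          gcongr
          exact Nat.cast_div_le
      _ ≤ 3 / 4 * R ^ 2 := by
          rw [← mul_sum, mul_comm]
          gcongr
          exact sum_Icc_two_inv_sq_le R
  have : (#(coprimePairs R) : ℝ) + #((Icc 1 R ×ˢ Icc 1 R).filter
      (fun v => ¬ Nat.Coprime v.1 v.2)) = R ^ 2 := by
    exact_mod_cast hsplit.trans (sq R).symm
  linarith

lemma card_coprimePairs_le (R : ℕ) : #(coprimePairs R) ≤ R ^ 2 :=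
  (card_filter_le _ _).trans (by rw [card_product, Nat.card_Icc, add_tsub_cancel_right, sq])

lemma eq_of_nsmul_eq_nsmul_of_coprime {k k' : ℕ} {v v' : ℕ × ℕ} (hv : Nat.Coprime v.1 v.2)
    (hv' : Nat.Coprime v'.1 v'.2) (h : k • v = k' • v') : k = k' := by
  have := congrArg (fun w : ℕ × ℕ => Nat.gcd w.1 w.2) h
  simpa [Nat.gcd_mul_left, hv.gcd_eq_one, hv'.gcd_eq_one] using this

lemma injOn_add_nsmul_of_coprime :
    Set.InjOn (fun i : (ℕ × ℕ) × ℕ × (ℕ × ℕ) => (i.2.2, i.2.2 + i.2.1 • i.1))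
      {i | Nat.Coprime i.1.1 i.1.2 ∧ i.2.1 ≠ 0} := by
  rintro ⟨v, k, x⟩ ⟨hv, hk⟩ ⟨v', k', x'⟩ ⟨hv', -⟩ h
  simp only [Prod.mk.injEq] at h
  obtain ⟨rfl, hkv⟩ := h
  have hkv := add_left_cancel hkv
  obtain rfl := eq_of_nsmul_eq_nsmul_of_coprime hv hv' hkv
  obtain rfl := nsmul_right_injective (M := ℕ × ℕ) hk hkv
  rfl

lemma inv_ed_smul_sub_castPair_add_nsmul (x v : ℕ × ℕ) {k : ℕ} (hk : k ≠ 0) :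
    (ed (castPair x) (castPair (x + k • v)))⁻¹ • (castPair x - castPair (x + k • v)) =
      -((ed 0 (castPair v))⁻¹ • castPair v) := by
  rw [map_add, map_nsmul, ← Nat.cast_smul_eq_nsmul ℝ]
  exact inv_ed_smul_sub_add_smul _ _ (by positivity)

theorem exists_grid_pairs (m R K X : ℕ) (hfit : X + K * R ≤ m + 1) :
    ∃ G : Finset ((ℝ × ℝ) × (ℝ × ℝ)), G ⊆ grid m ×ˢ grid m ∧ (∀ pq ∈ G, pq.1 ≠ pq.2) ∧
      #G = #(coprimePairs R) * K * X ^ 2 ∧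
      #(G.image fun pq => (ed pq.1 pq.2)⁻¹ • (pq.1 - pq.2)) ≤ R ^ 2 := by
  set I := coprimePairs R ×ˢ Icc 1 K ×ˢ (range X ×ˢ range X)
  have mem_I : ∀ i ∈ I, (1 ≤ i.1.1 ∧ i.1.1 ≤ R) ∧ (1 ≤ i.1.2 ∧ i.1.2 ≤ R) ∧
      Nat.Coprime i.1.1 i.1.2 ∧ (1 ≤ i.2.1 ∧ i.2.1 ≤ K) ∧ i.2.2.1 < X ∧ i.2.2.2 < X := by
    intro i hi
    simpa only [I, coprimePairs, mem_product, mem_filter, mem_Icc, mem_range, and_assoc] using hi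
  let f : (ℕ × ℕ) × ℕ × (ℕ × ℕ) → (ℝ × ℝ) × (ℝ × ℝ) := fun i =>
    (castPair i.2.2, castPair (i.2.2 + i.2.1 • i.1))
  refine ⟨I.image f, ?_, ?_, ?_, ?_⟩
  · intro _ hpq
    obtain ⟨i, hi, rfl⟩ := mem_image.1 hpq
    obtain ⟨⟨-, ha⟩, ⟨-, hb⟩, -, ⟨-, hk⟩, hx, hy⟩ := mem_I i hi
    have := Nat.mul_le_mul hk ha
    have := Nat.mul_le_mul hk hb
    simp only [f, mem_product, castPair_mem_grid, Prod.fst_add, Prod.snd_add, Prod.smul_fst,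
      Prod.smul_snd, smul_eq_mul]
    omega
  · intro _ hpq
    obtain ⟨i, hi, rfl⟩ := mem_image.1 hpq
    obtain ⟨⟨ha, -⟩, -, -, ⟨hk, -⟩, -⟩ := mem_I i hi
    intro h
    have := congrArg Prod.fst (castPair_injective h)
    simp only [Prod.fst_add, Prod.smul_fst, smul_eq_mul] at this
    have := Nat.mul_le_mul hk ha
    omega
  · rw [card_image_of_injOn]
    · simp only [I, card_product, card_range, Nat.card_Icc, add_tsub_cancel_right]
      ring
    rintro i hi j hj h
    obtain ⟨-, -, hv, ⟨hk, -⟩, -⟩ := mem_I i hi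
    obtain ⟨-, -, hv', ⟨hk', -⟩, -⟩ := mem_I j hj
    simp only [f, Prod.mk.injEq] at h
    exact injOn_add_nsmul_of_coprime ⟨hv, Nat.one_le_iff_ne_zero.1 hk⟩
      ⟨hv', Nat.one_le_iff_ne_zero.1 hk'⟩
      (Prod.ext_iff.2 (h.imp (@castPair_injective _ _) (@castPair_injective _ _)))
  · calc _ ≤ #((coprimePairs R).image fun v => -((ed 0 (castPair v))⁻¹ • castPair v)) := by
          refine card_le_card fun _ hd => ?_
          obtain ⟨_, hpq, rfl⟩ := mem_image.1 hd
          obtain ⟨i, hi, rfl⟩ := mem_image.1 hpq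
          obtain ⟨-, -, -, ⟨hk, -⟩, -⟩ := mem_I i hi
          refine mem_image.2 ⟨i.1, (mem_product.1 hi).1, ?_⟩
          exact (inv_ed_smul_sub_castPair_add_nsmul _ _ (Nat.one_le_iff_ne_zero.1 hk)).symm
      _ ≤ R ^ 2 := card_image_le.trans (card_coprimePairs_le R)

lemma sq_rpow_one_add {x : ℝ} (hx : 0 < x) (s : ℝ) :
    (x ^ 2) ^ (1 + s) = x ^ 3 * x ^ (2 * s - 1) := by
  rw [← Real.rpow_pow_comm hx.le, ← Real.rpow_mul_natCast hx.le,
    show (1 + s) * (2 : ℕ) = (3 : ℕ) + (2 * s - 1) by push_cast; ring,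
    Real.rpow_add hx, Real.rpow_natCast]

lemma exists_grid_params (m : ℕ) {r : ℝ} (hr : 1 ≤ r) (hrm : r ≤ m) :
    ∃ R K X : ℕ, X + K * R ≤ m + 1 ∧ (R : ℝ) ≤ 2 * r ∧
      r * m ^ 3 ≤ 32 * (R ^ 2 * K * X ^ 2 : ℕ) := by
  set M := (m + 1) / 2
  -- halving `r` keeps `R ≤ M = ⌈m / 2⌉`, so that `K = M / R ≥ 1`
  set R := ⌈r / 2⌉₊
  set K := M / R
  have hR : 1 ≤ R := Nat.one_le_ceil_iff.2 (by positivity)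
  have hRM : R ≤ M := Nat.ceil_le.2 <| by
    have : (m : ℝ) ≤ 2 * M := by exact_mod_cast (by omega : m ≤ 2 * M)
    linarith
  have hKR : K * R ≤ M := Nat.div_mul_le_self M R
  have hMKR : M ≤ 2 * (K * R) := by
    have hdiv : R * K + M % R = M := Nat.div_add_mod M R
    have hmod := Nat.mod_lt M (by omega : 0 < R)
    have hRKR : R ≤ R * K := Nat.le_mul_of_pos_right R (Nat.div_pos hRM (by omega))
    rw [mul_comm K R]
    omega
  refine ⟨R, K, m / 2 + 1, by omega, ?_, ?_⟩
  · linarith [Nat.ceil_lt_add_one (by positivity : 0 ≤ r / 2)]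
  · have hr2R : r ≤ 2 * R := by linarith [Nat.le_ceil (r / 2)]
    have hm4KR : (m : ℝ) ≤ 4 * (K * R) := by exact_mod_cast (by omega : m ≤ 4 * (K * R))
    have hm2X : (m : ℝ) ≤ 2 * (m / 2 + 1 : ℕ) := by exact_mod_cast (by omega : m ≤ 2 * (m / 2 + 1))
    calc r * m ^ 3 = r * m * m * m := by ring
      _ ≤ (2 * R) * (4 * (K * R)) * (2 * (m / 2 + 1 : ℕ)) * (2 * (m / 2 + 1 : ℕ)) := by
          gcongr
      _ = 32 * (R ^ 2 * K * (m / 2 + 1) ^ 2 : ℕ) := by push_cast; ring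

/-- The grid example: for `n = m²` a perfect square, `P = {0,…,m} × {0,…,m}` and
`1/2 ≤ s ≤ 1`, there is a set `G` of pairs of distinct points of `P` with
`|G| ≥ c·n^{1+s}` whose spanned direction set has at most `C·n^{2s-1}` elements,
while no line contains more than `m + 1 = n^{1/2} + 1` points of `P`. -/
theorem stmt9 :
    ∃ c C : ℝ, 0 < c ∧ 0 < C ∧ ∀ (m : ℕ) (s : ℝ), 2 ≤ m → 1/2 ≤ s → s ≤ 1 →
      ∀ n : ℝ, n = (m : ℝ)^2 →
      ∀ P : Finset (ℝ × ℝ),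
        P = ((Finset.range (m+1)) ×ˢ (Finset.range (m+1))).image
              (fun p => ((p.1 : ℝ), (p.2 : ℝ))) →
        (∃ G : Finset ((ℝ × ℝ) × (ℝ × ℝ)), G ⊆ P ×ˢ P ∧
          (∀ pq ∈ G, pq.1 ≠ pq.2) ∧
          c * n ^ (1 + s) ≤ G.card ∧
          ((G.image (fun pq => (ed pq.1 pq.2)⁻¹ • (pq.1 - pq.2))).card : ℝ)
            ≤ C * n ^ (2*s - 1)) ∧
        (∀ p₀ d : ℝ × ℝ, d ≠ 0 →
          (P.filter (fun p => ∃ t : ℝ, p = p₀ + t • d)).card ≤ m + 1) := by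
  refine ⟨1 / 128, 4, by norm_num, by norm_num, ?_⟩
  rintro m s hm hs₁ hs₂ n rfl P rfl
  have hm₁ : (1 : ℝ) ≤ m := by exact_mod_cast (by omega : 1 ≤ m)
  set r := (m : ℝ) ^ (2 * s - 1)
  have hr₁ : 1 ≤ r := Real.one_le_rpow hm₁ (by linarith)
  have hrm : r ≤ m := by
    simpa using Real.rpow_le_rpow_of_exponent_le hm₁ (by linarith : 2 * s - 1 ≤ 1)
  obtain ⟨R, K, X, hfit, hRr, hvol⟩ := exists_grid_params m hr₁ hrm
  obtain ⟨G, hGP, hGne, hGcard, hGdir⟩ := exists_grid_pairs m R K X hfit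
  refine ⟨⟨G, hGP, hGne, ?_, ?_⟩, fun p₀ d hd => card_grid_filter_mem_line_le m p₀ hd⟩
  · have hA := sq_le_four_mul_card_coprimePairs R
    rw [sq_rpow_one_add (by positivity), hGcard]
    push_cast at hvol ⊢
    calc 1 / 128 * (m ^ 3 * r) ≤ R ^ 2 / 4 * K * X ^ 2 := by linarith
      _ ≤ _ := by gcongr; linarith
  · rw [← Real.rpow_pow_comm (by positivity)]
    calc (_ : ℝ) ≤ R ^ 2 := by exact_mod_cast hGdir
      _ ≤ (2 * r) ^ 2 := by gcongr
      _ = 4 * r ^ 2 := by ring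
end
end

section
/- Let b₀ ∈ ℝ², let e, e' ∈ S¹ be two directions in the open northeast quadrant with angular separation at least δ^s, and let T, T' be tubes of width 2δ containing b₀ with directions e, e' respectively. If x ∈ T and y ∈ T' with |x − b₀| ≥ Cδ^{1−s} and |y − b₀| ≥ Cδ^{1−s} for a sufficiently large absolute constant C, and both x − b₀, y − b₀ lie in the closed cone spanned by e and e', then the point (x + y) − b₀ lies in the open conical region with apex b₀ between the two tubes T and T', at distance greater than δ from both T and T' (outside both tubes). -/
noncomputable section

/-- Rotation by `π/2`: a unit normal to `e`. -/
def perp (e : ℝ × ℝ) : ℝ × ℝ := (-e.2, e.1)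

/-!
Write `x - b₀ = a e + b e'` and `y - b₀ = a' e + b' e'`, and let `σ = ⟨e^⊥, e'⟩ = ±sin ∠(e, e')`,
so `|σ| ≥ (2/π) δ^s` by Jordan's inequality. The normal coordinate of `x - b₀` with respect to
`T` is `bσ`, so `x, b₀ ∈ T` forces
`b|σ| ≤ 2δ`; as `10 δ^{1-s} ≤ |x - b₀| ≤ a + b`, this gives
`a|σ| ≥ 10 δ^{1-s}|σ| - 2δ > 3δ`. Symmetrically `b'|σ| > 3δ`. The point `x + y - b₀` has normal
coordinate `(b + b')σ` with respect to `T`, so it lies more than `3δ - 2δ = δ` away from `T`;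
likewise for `T'`.
-/

open Real

lemma dot_sub (n p q : ℝ × ℝ) : dot n (p - q) = dot n p - dot n q := by
  simp only [dot, Prod.fst_sub, Prod.snd_sub]; ring

lemma dot_perp_perp (e : ℝ × ℝ) : dot (perp e) (perp e) = dot e e := by
  simp only [dot, perp]; ring

lemma dot_perp_comm (e e' : ℝ × ℝ) : dot (perp e') e = -dot (perp e) e' := by
  simp only [dot, perp]; ring

lemma dot_perp_smul_add_smul (e e' : ℝ × ℝ) (a b : ℝ) :
    dot (perp e) (a • e + b • e') = b * dot (perp e) e' := by
  simp only [dot, perp, Prod.fst_add, Prod.snd_add, Prod.smul_fst, Prod.smul_snd, smul_eq_mul]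
  ring

lemma dot_smul_add_smul_self (e e' : ℝ × ℝ) (a b : ℝ) :
    dot (a • e + b • e') (a • e + b • e') = a ^ 2 * dot e e + 2 * a * b * dot e e' + b ^ 2 * dot e' e' := by
  simp only [dot, Prod.fst_add, Prod.snd_add, Prod.smul_fst, Prod.smul_snd, smul_eq_mul]
  ring

lemma dot_sq_add_dot_perp_sq (u v : ℝ × ℝ) :
    dot u v ^ 2 + dot (perp u) v ^ 2 = dot u u * dot v v := by
  simp only [dot, perp]; ring

lemma dot_le_one {e e' : ℝ × ℝ} (he : dot e e = 1) (he' : dot e' e' = 1) : dot e e' ≤ 1 := by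
  nlinarith [dot_sq_add_dot_perp_sq e e', sq_nonneg (dot (perp e) e')]

lemma ed_eq_sqrt_dot (p q : ℝ × ℝ) : ed p q = √(dot (p - q) (p - q)) := by
  simp only [ed, dot, Prod.fst_sub, Prod.snd_sub, sq]

lemma dot_self_eq_one_of_ed_eq_one {e : ℝ × ℝ} (he : ed e 0 = 1) : dot e e = 1 := by
  rwa [ed_eq_sqrt_dot, sub_zero, sqrt_eq_one] at he

lemma abs_dot_sub_le_ed {n : ℝ × ℝ} (hn : dot n n = 1) (p q : ℝ × ℝ) :
    |dot n p - dot n q| ≤ ed p q := by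
  rw [← dot_sub, ed_eq_sqrt_dot, ← sqrt_sq_eq_abs]
  have hlag := dot_sq_add_dot_perp_sq n (p - q)
  rw [hn, one_mul] at hlag
  exact sqrt_le_sqrt (by nlinarith [sq_nonneg (dot (perp n) (p - q))])

lemma ed_le_add_of_eq_smul_add_smul {x b₀ e e' : ℝ × ℝ} {a b : ℝ} (he : dot e e = 1)
    (he' : dot e' e' = 1) (ha : 0 ≤ a) (hb : 0 ≤ b) (hx : x - b₀ = a • e + b • e') :
    ed x b₀ ≤ a + b := by
  rw [ed_eq_sqrt_dot, hx, ← sqrt_sq (add_nonneg ha hb), dot_smul_add_smul_self, he, he']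
  exact sqrt_le_sqrt (by nlinarith [mul_nonneg ha hb, dot_le_one he he'])

lemma abs_dot_sub_le_two_mul {n x y : ℝ × ℝ} {t δ : ℝ} (hx : |dot n x - t| ≤ δ)
    (hy : |dot n y - t| ≤ δ) : |dot n (x - y)| ≤ 2 * δ := by
  rw [dot_sub]
  linarith [abs_sub_le (dot n x) t (dot n y), abs_sub_comm t (dot n y)]

lemma two_div_pi_mul_arccos_le_abs_dot_perp {e e' : ℝ × ℝ} (he : dot e e = 1)
    (he' : dot e' e' = 1) (hc : 0 ≤ dot e e') :
    2 / π * arccos (dot e e') ≤ |dot (perp e) e'| := by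
  have hlag := dot_sq_add_dot_perp_sq e e'
  rw [he, he', one_mul] at hlag
  rw [← sqrt_sq_eq_abs, show dot (perp e) e' ^ 2 = 1 - dot e e' ^ 2 by linarith, ← sin_arccos]
  exact mul_le_sin (arccos_nonneg _) (arccos_le_pi_div_two.2 hc)

lemma lt_two_mul_abs_dot_perp_mul_rpow {e e' : ℝ × ℝ} {δ s : ℝ} (hδ : 0 < δ)
    (he : dot e e = 1) (he' : dot e' e' = 1) (hc : 0 ≤ dot e e')
    (hangle : δ ^ s ≤ arccos (dot e e')) :
    δ < 2 * (|dot (perp e) e'| * δ ^ (1 - s)) := by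
  have hσ : 2 / π * δ ^ s ≤ |dot (perp e) e'| :=
    (mul_le_mul_of_nonneg_left hangle (by positivity)).trans
      (two_div_pi_mul_arccos_le_abs_dot_perp he he' hc)
  have hsplit : δ ^ s * δ ^ (1 - s) = δ := by rw [← rpow_add hδ]; simp
  have hπ : 2 / π * 2 > 1 := by
    rw [gt_iff_lt, div_mul_eq_mul_div, one_lt_div pi_pos]; linarith [pi_lt_four]
  calc δ < 2 / π * 2 * δ := by nlinarith
    _ = 2 * (2 / π * δ ^ s * δ ^ (1 - s)) := by rw [mul_assoc _ (δ ^ s), hsplit]; ring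
    _ ≤ 2 * (|dot (perp e) e'| * δ ^ (1 - s)) := by gcongr

lemma three_mul_lt_mul_abs_dot_perp {b₀ e e' x : ℝ × ℝ} {δ r a b t : ℝ}
    (he : dot e e = 1) (he' : dot e' e' = 1)
    (hσ : δ < 2 * (|dot (perp e) e'| * r)) (ha : 0 ≤ a) (hb : 0 ≤ b)
    (hx : x - b₀ = a • e + b • e') (hb₀T : |dot (perp e) b₀ - t| ≤ δ)
    (hxT : |dot (perp e) x - t| ≤ δ) (hfar : 10 * r ≤ ed x b₀) :
    3 * δ < a * |dot (perp e) e'| := by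
  have hbσ : b * |dot (perp e) e'| ≤ 2 * δ := by
    have h := abs_dot_sub_le_two_mul hxT hb₀T
    rwa [hx, dot_perp_smul_add_smul, abs_mul, abs_of_nonneg hb] at h
  have hab : 10 * r ≤ a + b := hfar.trans (ed_le_add_of_eq_smul_add_smul he he' ha hb hx)
  nlinarith [abs_nonneg (dot (perp e) e')]

lemma lt_ed_of_three_mul_lt_abs_dot {n p b₀ w : ℝ × ℝ} {t δ : ℝ} (hn : dot n n = 1)
    (hb₀ : |dot n b₀ - t| ≤ δ) (hw : |dot n w - t| ≤ δ) (hp : 3 * δ < |dot n (p - b₀)|) :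
    δ < ed p w := by
  have hwb₀ := abs_dot_sub_le_two_mul hw hb₀
  rw [dot_sub] at hp hwb₀
  linarith [abs_sub_le (dot n p) (dot n w) (dot n b₀), abs_dot_sub_le_ed hn p w]

/-- Solymosi-type geometry: if `e, e'` are unit directions in the open northeast
quadrant with angle `≥ δ^s`, `T, T'` are `2δ`-wide tubes with directions `e, e'`
containing `b₀`, and `x ∈ T`, `y ∈ T'` lie in the closed cone spanned by `e, e'`
(based at `b₀`) with `|x - b₀|, |y - b₀| ≥ C·δ^{1-s}` for a large absolute `C`,
then `(x + y) - b₀` lies in the open cone with apex `b₀` between the tubes, at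
distance greater than `δ` from both tubes. -/
theorem stmt13 :
    ∃ C : ℝ, 0 < C ∧
      ∀ (δ s : ℝ) (b₀ e e' : ℝ × ℝ) (t t' : ℝ) (x y : ℝ × ℝ),
        0 < δ → 0 < s → s < 1 →
        ed e 0 = 1 → ed e' 0 = 1 →
        0 < e.1 → 0 < e.2 → 0 < e'.1 → 0 < e'.2 →
        δ ^ s ≤ Real.arccos (dot e e') →
        |dot (perp e) b₀ - t| ≤ δ → |dot (perp e') b₀ - t'| ≤ δ →
        |dot (perp e) x - t| ≤ δ → |dot (perp e') y - t'| ≤ δ →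
        C * δ ^ (1 - s) ≤ ed x b₀ → C * δ ^ (1 - s) ≤ ed y b₀ →
        (∃ a b : ℝ, 0 ≤ a ∧ 0 ≤ b ∧ x - b₀ = a • e + b • e') →
        (∃ a b : ℝ, 0 ≤ a ∧ 0 ≤ b ∧ y - b₀ = a • e + b • e') →
        (∃ a b : ℝ, 0 < a ∧ 0 < b ∧ (x + y - b₀) - b₀ = a • e + b • e') ∧
        (∀ w : ℝ × ℝ, |dot (perp e) w - t| ≤ δ → δ < ed (x + y - b₀) w) ∧
        (∀ w : ℝ × ℝ, |dot (perp e') w - t'| ≤ δ → δ < ed (x + y - b₀) w) := by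
  refine ⟨10, by norm_num, ?_⟩
  intro δ s b₀ e e' t t' x y hδ _ _ he he' he₁ he₂ he₁' he₂' hangle hb₀T hb₀T' hxT hyT hxfar hyfar
    ⟨a, b, ha, hb, hx⟩ ⟨a', b', ha', hb', hy⟩
  replace he := dot_self_eq_one_of_ed_eq_one he
  replace he' := dot_self_eq_one_of_ed_eq_one he'
  have hσ := lt_two_mul_abs_dot_perp_mul_rpow hδ he he' (by unfold dot; positivity) hangle
  have hσ' : δ < 2 * (|dot (perp e') e| * δ ^ (1 - s)) := by rwa [dot_perp_comm, abs_neg]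
  have hxa := three_mul_lt_mul_abs_dot_perp he he' hσ ha hb hx hb₀T hxT hxfar
  have hyb := three_mul_lt_mul_abs_dot_perp he' he hσ' hb' ha' (by rw [hy, add_comm])
    hb₀T' hyT hyfar
  rw [dot_perp_comm, abs_neg] at hyb
  have hsum : x + y - b₀ - b₀ = (a + a') • e + (b + b') • e' := by
    rw [show x + y - b₀ - b₀ = (x - b₀) + (y - b₀) by abel, hx, hy]
    module
  have hσ₀ := abs_nonneg (dot (perp e) e')
  refine ⟨⟨a + a', b + b', by nlinarith, by nlinarith, hsum⟩, fun w hw => ?_, fun w hw => ?_⟩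
  · refine lt_ed_of_three_mul_lt_abs_dot ((dot_perp_perp e).trans he) hb₀T hw ?_
    rw [hsum, dot_perp_smul_add_smul, abs_mul, abs_of_nonneg (add_nonneg hb hb')]
    nlinarith
  · refine lt_ed_of_three_mul_lt_abs_dot ((dot_perp_perp e').trans he') hb₀T' hw ?_
    rw [hsum, add_comm, dot_perp_smul_add_smul, dot_perp_comm, abs_mul, abs_neg,
      abs_of_nonneg (add_nonneg ha ha')]
    nlinarith
end
end

section
/- Let 0 < s < 1, τ > (s−σ)/(1−s) with 0 < σ < s, and let B ⊂ B(0,2) be a δ-separated set with |B| ~ δ^{-1} satisfying |B ∩ B(x,r)| ≤ C·r/δ for r ≥ δ. Suppose that for every b ∈ B, a set G(b) ⊂ B satisfies |G(b)| ≤ δ^{τ−1}. Then Σ_{b ∈ B} Σ_{b' ∈ G(b), b' ≠ b} |b − b'|^{-s} ≤ C'·δ^{−2 + τ(1−s)}·log(1/δ). -/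
/-! Split the fan of `b` into dyadic shells `2ʲδ ≤ |b - b'| < 2ʲ⁺¹δ`. A shell has at most
`min (2ʲ⁺¹C, δ^{τ-1}) ≤ (2ʲ⁺¹C)^s δ^{(τ-1)(1-s)}` points, each contributing at most `(2ʲδ)^{-s}`,
so every shell contributes `≲ δ^{τ(1-s)-1}` independently of `j`. There are `≲ log(1/δ)` shells
since `B ⊂ B(0,2)`, and `≲ δ⁻¹` points `b`. -/

noncomputable section

open Finset Real

lemma ed_eq_dist (p q : ℝ × ℝ) : ed p q = dist (WithLp.toLp 2 p) (WithLp.toLp 2 q) := by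
  simp [ed, WithLp.prod_dist_eq_of_L2, Real.dist_eq, sq_abs]

lemma ed_comm (p q : ℝ × ℝ) : ed p q = ed q p := by
  simp only [ed_eq_dist, dist_comm]

lemma ed_le_four_of_ed_zero_le_two {p q : ℝ × ℝ} (hp : ed p 0 ≤ 2) (hq : ed q 0 ≤ 2) :
    ed p q ≤ 4 := by
  have := dist_triangle_right (WithLp.toLp 2 p) (WithLp.toLp 2 q) (WithLp.toLp 2 0)
  rw [← ed_eq_dist, ← ed_eq_dist, ← ed_eq_dist] at this
  linarith

lemma le_rpow_mul_rpow_of_le_of_le {x A M s : ℝ} (hx : 0 ≤ x) (hs0 : 0 ≤ s) (hs1 : s ≤ 1)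
    (hA : x ≤ A) (hM : x ≤ M) : x ≤ A ^ s * M ^ (1 - s) :=
  calc x = x ^ s * x ^ (1 - s) := by rw [← rpow_add' hx (by norm_num)]; simp
    _ ≤ A ^ s * M ^ (1 - s) := mul_le_mul (rpow_le_rpow hx hA hs0)
        (rpow_le_rpow hx hM (by linarith)) (by positivity) (rpow_nonneg (hx.trans hA) _)

lemma rpow_le_one_add {x s : ℝ} (hx : 0 ≤ x) (hs0 : 0 ≤ s) (hs1 : s ≤ 1) :
    x ^ s ≤ 1 + x :=
  calc x ^ s ≤ (1 + x) ^ s := by gcongr; linarith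
    _ ≤ 1 + x := rpow_le_self_of_one_le (by linarith) hs1

section Shells

variable {ι : Type*} {S : Finset ι} {d : ι → ℝ} {M s : ℝ}

lemma sum_rpow_neg_le_of_card_le {a A : ℝ} (ha : 0 < a) (hs0 : 0 ≤ s) (hs1 : s ≤ 1)
    (hd : ∀ i ∈ S, a ≤ d i) (hA : (#S : ℝ) ≤ A) (hM : (#S : ℝ) ≤ M) :
    ∑ i ∈ S, d i ^ (-s) ≤ (A / a) ^ s * M ^ (1 - s) := by
  have hA0 : 0 ≤ A := (Nat.cast_nonneg _).trans hA
  calc ∑ i ∈ S, d i ^ (-s) ≤ #S • a ^ (-s) :=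
        sum_le_card_nsmul _ _ _ fun i hi ↦ rpow_le_rpow_of_nonpos ha (hd i hi) (by linarith)
    _ ≤ (A ^ s * M ^ (1 - s)) * a ^ (-s) := by
        rw [nsmul_eq_mul]
        gcongr
        exact le_rpow_mul_rpow_of_le_of_le (Nat.cast_nonneg _) hs0 hs1 hA hM
    _ = (A / a) ^ s * M ^ (1 - s) := by
        rw [div_rpow hA0 ha.le, rpow_neg ha.le]; ring

theorem sum_rpow_neg_le_of_dyadic {δ K : ℝ} (n : ℕ) (hδ : 0 < δ) (hs0 : 0 ≤ s) (hs1 : s ≤ 1)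
    (hd : ∀ i ∈ S, δ ≤ d i ∧ d i < 2 ^ n * δ)
    (hball : ∀ r, δ ≤ r → (#{i ∈ S | d i ≤ r} : ℝ) ≤ K * r / δ) (hM : (#S : ℝ) ≤ M) :
    ∑ i ∈ S, d i ^ (-s) ≤ n * ((2 * K / δ) ^ s * M ^ (1 - s)) := by
  induction n generalizing S with
  | zero =>
    have : S = ∅ := eq_empty_of_forall_notMem fun i hi ↦ by
      have := hd i hi
      rw [pow_zero, one_mul] at this
      exact this.1.not_gt this.2
    simp [this]
  | succ n ih =>
    rw [← sum_filter_add_sum_filter_not S (fun i ↦ d i < 2 ^ n * δ)]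
    have hinner := ih (S := {i ∈ S | d i < 2 ^ n * δ})
      (fun i hi ↦ ⟨(hd i (mem_filter.1 hi).1).1, (mem_filter.1 hi).2⟩)
      (fun r hr ↦ le_trans (by gcongr; exact filter_subset _ _) (hball r hr))
      (le_trans (by gcongr; exact filter_subset _ _) hM)
    have hpow : (0 : ℝ) < 2 ^ n * δ := by positivity
    have hshell : ∑ i ∈ S with ¬d i < 2 ^ n * δ, d i ^ (-s) ≤ (2 * K / δ) ^ s * M ^ (1 - s) := by
      have hr : δ ≤ 2 ^ (n + 1) * δ := le_mul_of_one_le_left hδ.le (one_le_pow₀ one_le_two)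
      have hcard : (#{i ∈ S | ¬d i < 2 ^ n * δ} : ℝ) ≤ K * (2 ^ (n + 1) * δ) / δ := by
        refine le_trans ?_ (hball _ hr)
        gcongr with i hi
        exact fun _ ↦ (hd i hi).2.le
      convert sum_rpow_neg_le_of_card_le hpow hs0 hs1 (fun i hi ↦ not_lt.1 (mem_filter.1 hi).2)
        hcard (le_trans (by gcongr; exact filter_subset _ _) hM) using 3
      field_simp
      ring
    push_cast
    linarith

end Shells

lemma sum_ed_rpow_neg_le_of_subset {B F : Finset (ℝ × ℝ)} {b : ℝ × ℝ} {δ s C M : ℝ} (n : ℕ)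
    (hδ : 0 < δ) (hs0 : 0 ≤ s) (hs1 : s ≤ 1) (hn : 4 < 2 ^ n * δ) (hball : ∀ b ∈ B, ed b 0 ≤ 2)
    (hsep : ∀ b' ∈ B, b ≠ b' → δ ≤ ed b b')
    (hcount : ∀ r, δ ≤ r → (#{p ∈ B | ed p b ≤ r} : ℝ) ≤ C * r / δ)
    (hb : b ∈ B) (hFB : F ⊆ B) (hFM : (#F : ℝ) ≤ M) :
    ∑ b' ∈ F.erase b, ed b b' ^ (-s) ≤ n * ((2 * C / δ) ^ s * M ^ (1 - s)) := by
  refine sum_rpow_neg_le_of_dyadic n hδ hs0 hs1 (fun b' hb' ↦ ?_) (fun r hr ↦ ?_)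
    (le_trans (by gcongr; exact erase_subset _ _) hFM)
  · have hb'B := hFB (mem_of_mem_erase hb')
    exact ⟨hsep b' hb'B (ne_of_mem_erase hb').symm,
      (ed_le_four_of_ed_zero_le_two (hball b hb) (hball b' hb'B)).trans_lt hn⟩
  · refine le_trans ?_ (hcount r hr)
    gcongr
    intro b' hb'
    simp only [mem_filter] at hb' ⊢
    exact ⟨hFB (mem_of_mem_erase hb'.1), ed_comm b' b ▸ hb'.2⟩

lemma inv_mul_rpow_div_rpow {δ s τ : ℝ} (hδ : 0 < δ) :
    δ⁻¹ * ((δ ^ (τ - 1)) ^ (1 - s) / δ ^ s) = δ ^ (-2 + τ * (1 - s)) := by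
  rw [div_eq_mul_inv, ← rpow_neg hδ.le, ← rpow_mul hδ.le, ← rpow_neg_one, ← rpow_add hδ,
    ← rpow_add hδ]
  ring_nf

lemma exists_four_lt_two_pow_mul_le_log {δ : ℝ} (hδ : 0 < δ) (hδ2 : δ ≤ 1 / 2) :
    ∃ n : ℕ, 4 < 2 ^ n * δ ∧ n ≤ 4 * log (1 / δ) / log 2 := by
  obtain ⟨m, hm, hm'⟩ := exists_nat_pow_near (x := 4 / δ) (y := (2 : ℝ))
    (by rw [le_div_iff₀ hδ]; linarith) one_lt_two
  refine ⟨m + 1, by rwa [← div_lt_iff₀ hδ], ?_⟩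
  have hlog2 : log 2 ≤ log (1 / δ) := log_le_log two_pos (by rw [le_div_iff₀ hδ]; linarith)
  have hm_log : m * log 2 ≤ 2 * log 2 + log (1 / δ) := by
    rw [← log_pow, show 2 * log 2 = log 4 by rw [← log_rpow two_pos]; norm_num,
      ← log_mul (by norm_num) (by positivity)]
    exact log_le_log (by positivity) (by rwa [mul_one_div])
  rw [le_div_iff₀ (log_pos one_lt_two)]
  push_cast
  linarith

/-- Upper bound in the fan-finding argument: if `B ⊂ B(0,2)` is δ-separated with
`|B| ∼ δ⁻¹` and `(δ,1)`-non-concentration `|B ∩ B(x,r)| ≤ C·r/δ`, and `G(b) ⊂ B`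
has `|G(b)| ≤ δ^{τ-1}` for every `b ∈ B` (where `0 < σ < s < 1` and
`τ > (s-σ)/(1-s)`), then
`Σ_{b ∈ B} Σ_{b' ∈ G(b), b' ≠ b} |b - b'|^{-s} ≤ C'·δ^{-2+τ(1-s)}·log(1/δ)`. -/
theorem stmt18 (C : ℝ) (hC : 0 < C) :
    ∃ C' : ℝ, 0 < C' ∧
      ∀ (δ s σ τ : ℝ) (B : Finset (ℝ × ℝ)) (G : (ℝ × ℝ) → Finset (ℝ × ℝ)),
        0 < δ → δ ≤ 1/2 → 0 < σ → σ < s → s < 1 → (s - σ)/(1 - s) < τ →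
        (∀ b ∈ B, ed b 0 ≤ 2) →
        (∀ b ∈ B, ∀ b' ∈ B, b ≠ b' → δ ≤ ed b b') →
        (∀ (x : ℝ × ℝ) (r : ℝ), δ ≤ r →
          ((B.filter (fun p => ed p x ≤ r)).card : ℝ) ≤ C * r / δ) →
        (B.card : ℝ) ≤ C / δ → C⁻¹ / δ ≤ (B.card : ℝ) →
        (∀ b ∈ B, G b ⊆ B ∧ ((G b).card : ℝ) ≤ δ ^ (τ - 1)) →
        (∑ b ∈ B, ∑ b' ∈ (G b).erase b, (ed b b') ^ (-s))
          ≤ C' * δ ^ (-2 + τ * (1 - s)) * Real.log (1/δ) := by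
  refine ⟨4 * C * (1 + 2 * C) / log 2, by positivity, ?_⟩
  intro δ s σ τ B G hδ hδ2 hσ hσs hs1 _ hball hsep hcount hcard _ hG
  have hs0 : 0 ≤ s := (hσ.trans hσs).le
  obtain ⟨n, hn, hn_log⟩ := exists_four_lt_two_pow_mul_le_log hδ hδ2
  have hfan : ∀ b ∈ B, ∑ b' ∈ (G b).erase b, ed b b' ^ (-s) ≤
      n * ((2 * C / δ) ^ s * (δ ^ (τ - 1)) ^ (1 - s)) := fun b hb ↦
    sum_ed_rpow_neg_le_of_subset n hδ hs0 hs1.le hn hball (hsep b hb) (hcount b) hb (hG b hb).1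
      (hG b hb).2
  calc ∑ b ∈ B, ∑ b' ∈ (G b).erase b, ed b b' ^ (-s) ≤
        #B • (n * ((2 * C / δ) ^ s * (δ ^ (τ - 1)) ^ (1 - s))) := sum_le_card_nsmul _ _ _ hfan
    _ ≤ C / δ * (n * ((2 * C / δ) ^ s * (δ ^ (τ - 1)) ^ (1 - s))) := by
        rw [nsmul_eq_mul]; gcongr
    _ = C * n * (2 * C) ^ s * δ ^ (-2 + τ * (1 - s)) := by
        rw [← inv_mul_rpow_div_rpow hδ, div_rpow (by positivity) hδ.le]; ring
    _ ≤ C * (4 * log (1 / δ) / log 2) * (1 + 2 * C) * δ ^ (-2 + τ * (1 - s)) := by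
        have hlog : 0 ≤ log (1 / δ) := log_nonneg (by rw [le_div_iff₀ hδ]; linarith)
        gcongr
        exact rpow_le_one_add (by positivity) hs0 hs1.le
    _ = 4 * C * (1 + 2 * C) / log 2 * δ ^ (-2 + τ * (1 - s)) * log (1 / δ) := by ring
end
end
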